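/- arXiv:2006.15405 — 7 statements merged into one kernel-verified Lean document; each statement's English description precedes it below -/
import Mathlib

section
/- Let A be a ring, J a nilpotent two-sided ideal of A, and G ⊆ A a subset generating A as a ring. If φ : A → A is a ring homomorphism such that φ(g) − g ∈ J² for every g ∈ G, then φ is surjective. -/
/-!
Write `I` for `J` viewed as an ideal and `Δ x = φ x - x`. Modulo the two-sided ideal `I²` the maps
`φ` and `id` are ring homomorphisms agreeing on the generators, so `Δ` takes values in `I²`.
The twisted Leibniz rule `Δ (u y) = φ u · Δ y + Δ u · y` then shows that `Δ` maps `I ^ k` into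
`I ^ (k + 1)`. Hence if `x - φ y ∈ I ^ k`, correcting `y` by `z = x - φ y` gives
`x - φ (y + z) = -Δ z ∈ I ^ (k + 1)`, and after `n` steps `I ^ n = 0` makes `x = φ y` exact.
-/

open Pointwise

theorem AddMonoidHom.surjective_of_sub_mem_succ {M : Type*} [AddCommGroup M]
    (F : ℕ → AddSubgroup M) (hF₀ : F 0 = ⊤) {n : ℕ} (hFn : F n = ⊥) (φ : M →+ M)
    (hφ : ∀ k, ∀ x ∈ F k, φ x - x ∈ F (k + 1)) : Function.Surjective φ := by
  have approx : ∀ k, ∀ x, ∃ y, x - φ y ∈ F k := by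
    intro k
    induction k with
    | zero => exact fun x => ⟨0, hF₀ ▸ AddSubgroup.mem_top _⟩
    | succ k ih =>
      intro x
      obtain ⟨y, hy⟩ := ih x
      refine ⟨y + (x - φ y), ?_⟩
      have : x - φ (y + (x - φ y)) = -(φ (x - φ y) - (x - φ y)) := by
        rw [map_add]; abel
      exact this ▸ neg_mem (hφ k _ hy)
  intro x
  obtain ⟨y, hy⟩ := approx n x
  rw [hFn, AddSubgroup.mem_bot, sub_eq_zero] at hy
  exact ⟨y, hy.symm⟩

theorem RingHom.sub_mem_of_closure_eq_top {A B : Type*} [Ring A] [Ring B]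
    (K : Ideal B) [K.IsTwoSided] {G : Set A} (hG : Subring.closure G = ⊤) (f g : A →+* B)
    (h : ∀ x ∈ G, f x - g x ∈ K) (x : A) : f x - g x ∈ K := by
  have : (Ideal.Quotient.mk K).comp f = (Ideal.Quotient.mk K).comp g :=
    RingHom.eq_of_eqOn_set_dense hG fun y hy => Ideal.Quotient.eq.2 (h y hy)
  exact Ideal.Quotient.eq.1 (RingHom.congr_fun this x)

theorem Ideal.sub_mem_pow_succ_of_forall_sub_mem_sq {A : Type*} [Ring A] (I : Ideal A)
    [I.IsTwoSided] (φ : A →+* A) (h : ∀ x, φ x - x ∈ I ^ 2) {k : ℕ} {x : A}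
    (hx : x ∈ I ^ k) : φ x - x ∈ I ^ (k + 1) := by
  induction k generalizing x with
  | zero => simpa [Submodule.pow_one] using Ideal.pow_le_self two_ne_zero (h x)
  | succ k ih =>
    rw [Ideal.IsTwoSided.pow_succ] at hx
    refine Submodule.smul_induction_on hx (fun u hu y hy => ?_) fun a b ha hb => ?_
    · have hφu : φ u ∈ I := by
        simpa using I.add_mem (Ideal.pow_le_self two_ne_zero (h u)) hu
      have leibniz : φ (u * y) - u * y = φ u * (φ y - y) + (φ u - u) * y := by
        rw [map_mul]; noncomm_ring
      rw [smul_eq_mul, leibniz]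
      refine add_mem ?_ ?_
      · rw [Ideal.IsTwoSided.pow_succ]
        exact Ideal.mul_mem_mul hφu (ih hy)
      · rw [show k + 1 + 1 = 2 + k by omega, Ideal.IsTwoSided.pow_add]
        exact Ideal.mul_mem_mul (h u) hy
    · rw [map_add, add_sub_add_comm]
      exact add_mem ha hb

namespace TwoSidedIdeal

variable {A : Type*} [Ring A] (J : TwoSidedIdeal A)

theorem asIdeal_pow (k : ℕ) : J.asIdeal ^ k = Ideal.span ((J : Set A) ^ k) := by
  induction k with
  | zero => simp
  | succ k ih =>
    have hspan : Ideal.span (J : Set A) = J.asIdeal := Ideal.span_eq J.asIdeal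
    have : (Ideal.span (J : Set A)).IsTwoSided := hspan ▸ inferInstance
    rw [Ideal.IsTwoSided.pow_succ, ih, ← hspan, Ideal.span_mul_span', pow_succ']

theorem asIdeal_pow_eq_bot {n : ℕ}
    (hJ : ∀ f : Fin n → A, (∀ i, f i ∈ J) → (List.ofFn f).prod = 0) : J.asIdeal ^ n = ⊥ := by
  rw [asIdeal_pow, Ideal.span_eq_bot]
  rintro _ hx
  obtain ⟨f, rfl⟩ := Set.mem_pow.1 hx
  exact hJ (fun i => f i) fun i => (f i).2

theorem closure_mul_le_asIdeal_sq :
    AddSubgroup.closure {z : A | ∃ u ∈ J, ∃ v ∈ J, z = u * v} ≤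
      (J.asIdeal ^ 2).toAddSubgroup := by
  rw [AddSubgroup.closure_le]
  rintro _ ⟨u, hu, v, hv, rfl⟩
  show u * v ∈ J.asIdeal ^ 2
  rw [Submodule.pow_succ, Submodule.pow_one]
  exact Ideal.mul_mem_mul hu hv

end TwoSidedIdeal

/-- If `A` is a ring, `J` a nilpotent two-sided ideal of `A`, `G ⊆ A` a set generating `A`
as a ring, and `φ : A → A` a ring homomorphism with `φ(g) − g ∈ J²` for every `g ∈ G`
(where `J²` is the additive closure of the set of products of two elements of `J`),
then `φ` is surjective. -/
theorem ringHom_surjective_of_generators_fixed_mod_radical_sq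
    (A : Type*) [Ring A] (J : TwoSidedIdeal A)
    (hnil : ∃ n : ℕ, 0 < n ∧ ∀ f : Fin n → A, (∀ i, f i ∈ J) → (List.ofFn f).prod = 0)
    (G : Set A) (hG : Subring.closure G = ⊤)
    (φ : A →+* A)
    (hφ : ∀ g ∈ G, φ g - g ∈ AddSubgroup.closure {z : A | ∃ u ∈ J, ∃ v ∈ J, z = u * v}) :
    Function.Surjective φ := by
  obtain ⟨n, -, hn⟩ := hnil
  have hsq : ∀ x, φ x - x ∈ J.asIdeal ^ 2 :=
    RingHom.sub_mem_of_closure_eq_top _ hG φ (.id A)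
      fun g hg => J.closure_mul_le_asIdeal_sq (hφ g hg)
  have hpow : J.asIdeal ^ n = ⊥ := J.asIdeal_pow_eq_bot hn
  exact AddMonoidHom.surjective_of_sub_mem_succ (fun k => (J.asIdeal ^ k).toAddSubgroup)
    (by simp) (n := n) (by simp [hpow]) φ.toAddMonoidHom
    fun _ _ hx => J.asIdeal.sub_mem_pow_succ_of_forall_sub_mem_sq φ hsq hx
end

section
/- Let K be a field and A a finite-dimensional K-algebra with Jacobson radical J, generated as a K-algebra by a set G. If φ : A → A is a K-algebra homomorphism with φ(g) − g ∈ J² for every g ∈ G, then φ is a K-algebra automorphism of A. -/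
/-!
Modulo the two-sided ideal `J²` the homomorphism `φ` agrees with the identity on the generators,
hence everywhere. Writing `φ = 1 + D`, the twisted Leibniz rule `D (x y) = D x * y + φ x * D y`
then gives `D (J ^ k) ⊆ J ^ (k + 1)`, so `D` is nilpotent because `J` is, and `φ = 1 + D` is a
unit of `End_K A`.
-/

namespace AlgHom

variable {K A : Type*} [CommRing K] [Ring A] [Algebra K A]

theorem sub_self_mem_of_adjoin_eq_top {G : Set A} (hG : Algebra.adjoin K G = ⊤)
    (I : Ideal A) [I.IsTwoSided] (φ : A →ₐ[K] A) (hφ : ∀ g ∈ G, φ g - g ∈ I) (a : A) :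
    φ a - a ∈ I := by
  have hmk : (Ideal.Quotient.mkₐ K I).comp φ = Ideal.Quotient.mkₐ K I :=
    ext_of_adjoin_eq_top hG fun g hg => Ideal.Quotient.eq.mpr (hφ g hg)
  exact Ideal.Quotient.eq.mp (DFunLike.congr_fun hmk a)

section

variable (I : Submodule K A) (φ : A →ₐ[K] A)

theorem sub_self_mem_pow_succ (hφ : ∀ a, φ a - a ∈ I * I) (hI : I * I ≤ I) {k : ℕ} {x : A}
    (hx : x ∈ I ^ k) :
    φ x - x ∈ I ^ (k + 1) := by
  induction k generalizing x with
  | zero =>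
    obtain ⟨c, rfl⟩ := Submodule.mem_one.mp hx
    simp
  | succ k ih =>
    rw [pow_succ'] at hx
    induction hx using Submodule.mul_induction_on' with
    | mem_mul_mem y hy z hz =>
      have hφy : φ y ∈ I := by simpa using add_mem (hI (hφ y)) hy
      have e : φ (y * z) - y * z = (φ y - y) * z + φ y * (φ z - z) := by
        rw [map_mul]; noncomm_ring
      have h₁ : (φ y - y) * z ∈ I ^ (k + 1 + 1) := by
        rw [pow_succ', pow_succ', ← mul_assoc]
        exact Submodule.mul_mem_mul (hφ y) hz
      have h₂ : φ y * (φ z - z) ∈ I ^ (k + 1 + 1) := by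
        rw [pow_succ']
        exact Submodule.mul_mem_mul hφy (ih hz)
      exact e ▸ add_mem h₁ h₂
    | add y _ z _ hy hz =>
      simpa [add_sub_add_comm] using add_mem hy hz

theorem isNilpotent_toLinearMap_sub_one (hφ : ∀ a, φ a - a ∈ I * I) (hI : I * I ≤ I)
    {n : ℕ} (hn : I ^ n = ⊥) :
    IsNilpotent (φ.toLinearMap - 1) := by
  have hpow : ∀ m k x, x ∈ I ^ k → ((φ.toLinearMap - 1) ^ m) x ∈ I ^ (k + m) := by
    intro m k x hx
    induction m with
    | zero => simpa using hx
    | succ m ih =>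
      rw [pow_succ', Module.End.mul_apply]
      exact sub_self_mem_pow_succ I φ hφ hI ih
  refine ⟨n + 1, LinearMap.ext fun a => ?_⟩
  have h := hpow n 2 ((φ.toLinearMap - 1) a) (by rw [pow_two]; exact hφ a)
  rwa [pow_add, hn, Submodule.mul_bot, Submodule.mem_bot, ← Module.End.mul_apply,
    ← pow_succ] at h

theorem bijective_of_sub_self_mem_mul_self (hφ : ∀ a, φ a - a ∈ I * I) (hI : I * I ≤ I)
    {n : ℕ} (hn : I ^ n = ⊥) :
    Function.Bijective φ := by
  have h := (isNilpotent_toLinearMap_sub_one I φ hφ hI hn).isUnit_one_add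
  rwa [add_sub_cancel, Module.End.isUnit_iff] at h

end

end AlgHom

/-- Let `K` be a field and `A` a finite-dimensional `K`-algebra with Jacobson radical `J`,
generated as a `K`-algebra by a set `G`. If `φ : A → A` is a `K`-algebra homomorphism with
`φ(g) − g ∈ J²` for every `g ∈ G`, then `φ` is a `K`-algebra automorphism (i.e. bijective). -/
theorem algHom_bijective_of_generators_fixed_mod_radical_sq
    (K : Type*) [Field K] (A : Type*) [Ring A] [Algebra K A] [FiniteDimensional K A]
    (G : Set A) (hG : Algebra.adjoin K G = ⊤)
    (φ : A →ₐ[K] A)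
    (hφ : ∀ g ∈ G, φ g - g ∈
      ((Ideal.jacobson (⊥ : Ideal A)).restrictScalars K) *
        ((Ideal.jacobson (⊥ : Ideal A)).restrictScalars K)) :
    Function.Bijective φ := by
  have : IsArtinianRing A := .of_finite K A
  obtain ⟨n, hn⟩ := IsArtinianRing.isNilpotent_jacobson_bot (R := A)
  set J := Ideal.jacobson (⊥ : Ideal A)
  have hJ_pow : (J.restrictScalars K) ^ (n + 1) = ⊥ := by
    rw [← Submodule.restrictScalars_pow n.add_one_ne_zero, Submodule.pow_succ, hn, zero_mul,
      Submodule.zero_eq_bot, Submodule.restrictScalars_bot]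
  have hJ_mul : J.restrictScalars K * J.restrictScalars K ≤ J.restrictScalars K :=
    Submodule.mul_le.mpr fun a _ _ hb => J.mul_mem_left a hb
  have hφ' : ∀ a, φ a - a ∈ J.restrictScalars K * J.restrictScalars K :=
    AlgHom.sub_self_mem_of_adjoin_eq_top hG (J * J) φ hφ
  exact AlgHom.bijective_of_sub_self_mem_mul_self _ φ hφ' hJ_mul hJ_pow
end

section
/- Let K be a commutative ring and R = K⟨x,y⟩/(x², y³, (x+y)³). Then xyxy + xyyx = 0 in R. -/
noncomputable section

/-- The relations `x² = 0`, `y³ = 0`, `(x+y)³ = 0` on `K⟨x,y⟩`, with `x = ι 0`, `y = ι 1`. -/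
inductive Rel6 (K : Type*) [CommRing K] :
    FreeAlgebra K (Fin 2) → FreeAlgebra K (Fin 2) → Prop
  | xx : Rel6 K (FreeAlgebra.ι K 0 * FreeAlgebra.ι K 0) 0
  | yyy : Rel6 K (FreeAlgebra.ι K 1 * (FreeAlgebra.ι K 1 * FreeAlgebra.ι K 1)) 0
  | pow : Rel6 K ((FreeAlgebra.ι K 0 + FreeAlgebra.ι K 1) ^ 3) 0

/-- The algebra `R(E₆) = K⟨x,y⟩/(x², y³, (x+y)³)`. -/
abbrev RE6 (K : Type*) [CommRing K] := RingQuot (Rel6 K)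

/-- The image of `x` in `R(E₆)`. -/
def e6x (K : Type*) [CommRing K] : RE6 K :=
  RingQuot.mkRingHom (Rel6 K) (FreeAlgebra.ι K 0)

/-- The image of `y` in `R(E₆)`. -/
def e6y (K : Type*) [CommRing K] : RE6 K :=
  RingQuot.mkRingHom (Rel6 K) (FreeAlgebra.ι K 1)

/-- In `R(E₆) = K⟨x,y⟩/(x², y³, (x+y)³)` we have `xyxy + xyyx = 0`. -/
theorem e6_relation_xyxy_xyyx (K : Type*) [CommRing K] :
    e6x K * e6y K * e6x K * e6y K + e6x K * e6y K * e6y K * e6x K = 0 := by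
  set X := e6x K with hX
  set Y := e6y K with hY
  have hx : X * X = 0 := by
    rw [hX, e6x, ← map_mul, RingQuot.mkRingHom_rel Rel6.xx, map_zero]
  have hy : Y * (Y * Y) = 0 := by
    rw [hY, e6y, ← map_mul, ← map_mul, RingQuot.mkRingHom_rel Rel6.yyy, map_zero]
  have hp : (X + Y) ^ 3 = 0 := by
    rw [hX, hY, e6x, e6y, ← map_add, ← map_pow, RingQuot.mkRingHom_rel Rel6.pow, map_zero]
  have key : X * Y * X * Y + X * Y * Y * X =
      X * (X + Y) ^ 3 - (X * X) * (X * X + X * Y + Y * X + Y * Y) - X * (Y * (Y * Y)) - X * (Y * (X * X)) := by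
    noncomm_ring
  rw [key, hp, hx, hy, mul_zero, mul_zero, mul_zero, zero_mul, sub_zero, sub_zero, sub_zero]
end
end

section
/- Let K be a commutative ring and R = K⟨x,y⟩/(x², y³, (x+y)³). Then yxyx + yxyy + yyxy = 0 in R. -/
noncomputable section

/-- In `R(E₆) = K⟨x,y⟩/(x², y³, (x+y)³)` we have `yxyx + yxyy + yyxy = 0`. -/
theorem e6_relation_yxyx_yxyy_yyxy (K : Type*) [CommRing K] :
    e6y K * e6x K * e6y K * e6x K + e6y K * e6x K * e6y K * e6y K
      + e6y K * e6y K * e6x K * e6y K = 0 := by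
  set X := e6x K with hX
  set Y := e6y K with hY
  have hx : X * X = 0 := by
    rw [hX, e6x, ← map_mul, RingQuot.mkRingHom_rel Rel6.xx, map_zero]
  have hy : Y * (Y * Y) = 0 := by
    rw [hY, e6y, ← map_mul, ← map_mul, RingQuot.mkRingHom_rel Rel6.yyy, map_zero]
  have hp : (X + Y) ^ 3 = 0 := by
    rw [hX, hY, e6x, e6y, ← map_add, ← map_pow, RingQuot.mkRingHom_rel Rel6.pow, map_zero]
  have key : Y * X * Y * X + Y * X * Y * Y + Y * Y * X * Y
      = Y * (X + Y) ^ 3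
        - (Y * (X * X) * X + Y * (X * X) * Y + Y * Y * (X * X)
          + Y * (Y * Y) * X + Y * (Y * Y) * Y) := by
    noncomm_ring
  rw [key, hx, hy, hp]
  noncomm_ring
end
end

section
/- Let K be a commutative ring and R = K⟨x,y⟩/(x², y³, (x+y)³). Then every product of six factors, each equal to x or to y, is zero in R. Equivalently, J⁶ = 0 where J is the two-sided ideal of R generated by x and y. -/
noncomputable section

theorem e6aux_xyxyxy {A : Type*} [Ring A] {X Y : A} (hX : X * X = 0)
    (hY : Y * (Y * Y) = 0)
    (hS : X * Y * X + X * Y * Y + Y * X * Y + Y * Y * X = 0) :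
    X * (Y * (X * (Y * (X * (Y))))) = 0 := by
  have h : X * (Y * (X * (Y * (X * (Y))))) = -(X * X) * (Y * X * X * Y) - (X * X) * (Y * Y * X * Y) - (X * Y * Y) * (X * X) * (Y) + (X) * (X * Y * X + X * Y * Y + Y * X * Y + Y * Y * X) * (X * Y) := by noncomm_ring
  simp only [hX, hY, hS, zero_mul, mul_zero, add_zero, zero_add, neg_zero, sub_zero,
    zero_sub, sub_self, neg_neg] at h
  exact h

theorem e6aux_xyxyyx {A : Type*} [Ring A] {X Y : A} (hX : X * X = 0)
    (hY : Y * (Y * Y) = 0)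
    (hS : X * Y * X + X * Y * Y + Y * X * Y + Y * Y * X = 0) :
    X * (Y * (X * (Y * (Y * (X))))) = 0 := by
  have h : X * (Y * (X * (Y * (Y * (X))))) = -(X * X) * (Y * X * Y * X) - (X * X) * (Y * Y * Y * X) - (Y) * (X * X) * (Y * X * X) - (Y) * (X * X) * (Y * Y * X) + (X * Y) * (X * X) * (Y * X) + (Y * Y) * (X * X) * (Y * X) - (Y * X * Y * Y) * (X * X) - (X * Y * X + X * Y * Y + Y * X * Y + Y * Y * X) * (X * Y * X) + (X) * (X * Y * X + X * Y * Y + Y * X * Y + Y * Y * X) * (Y * X) + (Y * X) * (X * Y * X + X * Y * Y + Y * X * Y + Y * Y * X) * (X) := by noncomm_ring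
  simp only [hX, hY, hS, zero_mul, mul_zero, add_zero, zero_add, neg_zero, sub_zero,
    zero_sub, sub_self, neg_neg] at h
  exact h

theorem e6aux_xyyxyx {A : Type*} [Ring A] {X Y : A} (hX : X * X = 0)
    (hY : Y * (Y * Y) = 0)
    (hS : X * Y * X + X * Y * Y + Y * X * Y + Y * Y * X = 0) :
    X * (Y * (Y * (X * (Y * (X))))) = 0 := by
  have h : X * (Y * (Y * (X * (Y * (X))))) = (Y) * (X * X) * (Y * X * X) + (Y) * (X * X) * (Y * Y * X) - (X * Y) * (X * X) * (Y * X) - (Y * Y) * (X * X) * (Y * X) + (Y * X * Y * Y) * (X * X) + (X * Y * X + X * Y * Y + Y * X * Y + Y * Y * X) * (X * Y * X) - (Y * X) * (X * Y * X + X * Y * Y + Y * X * Y + Y * Y * X) * (X) := by noncomm_ring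
  simp only [hX, hY, hS, zero_mul, mul_zero, add_zero, zero_add, neg_zero, sub_zero,
    zero_sub, sub_self, neg_neg] at h
  exact h

theorem e6aux_xyyxyy {A : Type*} [Ring A] {X Y : A} (hX : X * X = 0)
    (hY : Y * (Y * Y) = 0)
    (hS : X * Y * X + X * Y * Y + Y * X * Y + Y * Y * X = 0) :
    X * (Y * (Y * (X * (Y * (Y))))) = 0 := by
  have h : X * (Y * (Y * (X * (Y * (Y))))) = -(X * X) * (Y * X * Y * Y) - (X * X) * (Y * Y * Y * Y) - (X * Y * X) * (Y * (Y * Y)) + (X) * (X * Y * X + X * Y * Y + Y * X * Y + Y * Y * X) * (Y * Y) := by noncomm_ring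
  simp only [hX, hY, hS, zero_mul, mul_zero, add_zero, zero_add, neg_zero, sub_zero,
    zero_sub, sub_self, neg_neg] at h
  exact h

theorem e6aux_yxyxyx {A : Type*} [Ring A] {X Y : A} (hX : X * X = 0)
    (hY : Y * (Y * Y) = 0)
    (hS : X * Y * X + X * Y * Y + Y * X * Y + Y * Y * X = 0) :
    Y * (X * (Y * (X * (Y * (X))))) = 0 := by
  have h : Y * (X * (Y * (X * (Y * (X))))) = -(Y) * (X * X) * (Y * X * X) - (Y) * (X * X) * (Y * Y * X) - (Y * X * Y * Y) * (X * X) + (Y * X) * (X * Y * X + X * Y * Y + Y * X * Y + Y * Y * X) * (X) := by noncomm_ring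
  simp only [hX, hY, hS, zero_mul, mul_zero, add_zero, zero_add, neg_zero, sub_zero,
    zero_sub, sub_self, neg_neg] at h
  exact h

theorem e6aux_yxyxyy {A : Type*} [Ring A] {X Y : A} (hX : X * X = 0)
    (hY : Y * (Y * Y) = 0)
    (hS : X * Y * X + X * Y * Y + Y * X * Y + Y * Y * X = 0) :
    Y * (X * (Y * (X * (Y * (Y))))) = 0 := by
  have h : Y * (X * (Y * (X * (Y * (Y))))) = (X * X) * (Y * X * Y * Y) + (X * X) * (Y * Y * Y * Y) - (X * Y) * (X * X) * (Y * Y) - (Y * Y) * (X * X) * (Y * Y) + (X * Y * X) * (Y * (Y * Y)) + (X * Y * X + X * Y * Y + Y * X * Y + Y * Y * X) * (X * Y * Y) - (X) * (X * Y * X + X * Y * Y + Y * X * Y + Y * Y * X) * (Y * Y) := by noncomm_ring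
  simp only [hX, hY, hS, zero_mul, mul_zero, add_zero, zero_add, neg_zero, sub_zero,
    zero_sub, sub_self, neg_neg] at h
  exact h

theorem e6aux_yxyyxy {A : Type*} [Ring A] {X Y : A} (hX : X * X = 0)
    (hY : Y * (Y * Y) = 0)
    (hS : X * Y * X + X * Y * Y + Y * X * Y + Y * Y * X = 0) :
    Y * (X * (Y * (Y * (X * (Y))))) = 0 := by
  have h : Y * (X * (Y * (Y * (X * (Y))))) = -(X * X) * (Y * X * Y * Y) - (X * X) * (Y * Y * Y * Y) - (Y) * (X * X) * (Y * X * Y) - (Y) * (X * X) * (Y * Y * Y) + (X * Y) * (X * X) * (Y * Y) + (Y * Y) * (X * X) * (Y * Y) - (X * Y * X) * (Y * (Y * Y)) - (X * Y * X + X * Y * Y + Y * X * Y + Y * Y * X) * (X * Y * Y) + (X) * (X * Y * X + X * Y * Y + Y * X * Y + Y * Y * X) * (Y * Y) + (Y * X) * (X * Y * X + X * Y * Y + Y * X * Y + Y * Y * X) * (Y) := by noncomm_ring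
  simp only [hX, hY, hS, zero_mul, mul_zero, add_zero, zero_add, neg_zero, sub_zero,
    zero_sub, sub_self, neg_neg] at h
  exact h

theorem e6aux_yyxyxy {A : Type*} [Ring A] {X Y : A} (hX : X * X = 0)
    (hY : Y * (Y * Y) = 0)
    (hS : X * Y * X + X * Y * Y + Y * X * Y + Y * Y * X = 0) :
    Y * (Y * (X * (Y * (X * (Y))))) = 0 := by
  have h : Y * (Y * (X * (Y * (X * (Y))))) = (X * X) * (Y * X * X * Y) + (X * X) * (Y * X * Y * Y) + (X * X) * (Y * Y * X * Y) + (X * X) * (Y * Y * Y * Y) + (Y) * (X * X) * (Y * X * Y) + (Y) * (X * X) * (Y * Y * Y) - (X * Y) * (X * X) * (Y * Y) - (Y * Y) * (X * X) * (Y * Y) + (X * Y * Y) * (X * X) * (Y) - (X) * (Y * (Y * Y)) * (X * Y) + (X * Y * X) * (Y * (Y * Y)) + (X * Y * X + X * Y * Y + Y * X * Y + Y * Y * X) * (X * Y * Y) + (X * Y * X + X * Y * Y + Y * X * Y + Y * Y * X) * (Y * X * Y) - (X) * (X * Y * X + X * Y * Y + Y * X * Y + Y * Y * X) * (X * Y)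 - (X) * (X * Y * X + X * Y * Y + Y * X * Y + Y * Y * X) * (Y * Y) - (Y * X) * (X * Y * X + X * Y * Y + Y * X * Y + Y * Y * X) * (Y) := by noncomm_ring
  simp only [hX, hY, hS, zero_mul, mul_zero, add_zero, zero_add, neg_zero, sub_zero,
    zero_sub, sub_self, neg_neg] at h
  exact h

theorem e6aux_yyxyyx {A : Type*} [Ring A] {X Y : A} (hX : X * X = 0)
    (hY : Y * (Y * Y) = 0)
    (hS : X * Y * X + X * Y * Y + Y * X * Y + Y * Y * X = 0) :
    Y * (Y * (X * (Y * (Y * (X))))) = 0 := by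
  have h : Y * (Y * (X * (Y * (Y * (X))))) = (X * X) * (Y * X * Y * X) + (X * X) * (Y * Y * Y * X) + (Y) * (X * X) * (Y * X * X) + (Y) * (X * X) * (Y * Y * X) - (X * Y) * (X * X) * (Y * X) - (Y * Y) * (X * X) * (Y * X) + (Y * X * Y * Y) * (X * X) - (X) * (Y * (Y * Y)) * (Y * X) - (Y * X) * (Y * (Y * Y)) * (X) + (X * Y * X + X * Y * Y + Y * X * Y + Y * Y * X) * (X * Y * X) + (X * Y * X + X * Y * Y + Y * X * Y + Y * Y * X) * (Y * Y * X) - (X) * (X * Y * X + X * Y * Y + Y * X * Y + Y * Y * X) * (Y * X) - (Y * X) * (X * Y * X + X * Y * Y + Y * X * Y + Y * Y * X) * (X) := by noncomm_ring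
  simp only [hX, hY, hS, zero_mul, mul_zero, add_zero, zero_add, neg_zero, sub_zero,
    zero_sub, sub_self, neg_neg] at h
  exact h


theorem e6master {A : Type*} [Ring A] {X Y : A} (hX : X * X = 0)
    (hY : Y * (Y * Y) = 0)
    (hS : X * Y * X + X * Y * Y + Y * X * Y + Y * Y * X = 0)
    (w : Fin 6 → A) (hw : ∀ i, w i = X ∨ w i = Y) :
    (List.ofFn w).prod = 0 := by
  have hX2 : ∀ z : A, X * (X * z) = 0 := fun z => by rw [← mul_assoc, hX, zero_mul]
  have hY2 : ∀ z : A, Y * (Y * (Y * z)) = 0 := fun z => by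
    rw [show Y * (Y * (Y * z)) = (Y * (Y * Y)) * z by noncomm_ring, hY, zero_mul]
  have e : (List.ofFn w).prod = w 0 * (w 1 * (w 2 * (w 3 * (w 4 * w 5)))) := by
    simp [List.ofFn_succ, Fin.isValue, mul_assoc]
  rw [e]
  rcases hw 0 with h0 | h0 <;> rcases hw 1 with h1 | h1 <;> rcases hw 2 with h2 | h2 <;>
    rcases hw 3 with h3 | h3 <;> rcases hw 4 with h4 | h4 <;> rcases hw 5 with h5 | h5 <;>
    rw [h0, h1, h2, h3, h4, h5] <;>
    try simp only [hX, hY, hX2, hY2, mul_zero, zero_mul]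
  all_goals first
    | exact e6aux_xyxyxy hX hY hS
    | exact e6aux_xyxyyx hX hY hS
    | exact e6aux_xyyxyx hX hY hS
    | exact e6aux_xyyxyy hX hY hS
    | exact e6aux_yxyxyx hX hY hS
    | exact e6aux_yxyxyy hX hY hS
    | exact e6aux_yxyyxy hX hY hS
    | exact e6aux_yyxyxy hX hY hS
    | exact e6aux_yyxyyx hX hY hS


/-- In `R(E₆) = K⟨x,y⟩/(x², y³, (x+y)³)`, every product of six factors, each equal to `x`
or to `y`, is zero; that is, `J⁶ = 0` for the two-sided ideal `J` generated by `x` and `y`. -/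
theorem e6_words_length_six_eq_zero (K : Type*) [CommRing K]
    (w : Fin 6 → RE6 K) (hw : ∀ i, w i = e6x K ∨ w i = e6y K) :
    (List.ofFn w).prod = 0 := by
  have hX : e6x K * e6x K = 0 := by
    have h := RingQuot.mkRingHom_rel (Rel6.xx (K := K))
    simpa [e6x, map_mul] using h
  have hY : e6y K * (e6y K * e6y K) = 0 := by
    have h := RingQuot.mkRingHom_rel (Rel6.yyy (K := K))
    simpa [e6y, map_mul] using h
  have hP : (e6x K + e6y K) ^ 3 = 0 := by
    have h := RingQuot.mkRingHom_rel (Rel6.pow (K := K))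
    simpa [e6x, e6y, map_pow, map_add] using h
  have hS : e6x K * e6y K * e6x K + e6x K * e6y K * e6y K + e6y K * e6x K * e6y K +
      e6y K * e6y K * e6x K = 0 := by
    have e : (e6x K + e6y K) ^ 3 =
        (e6x K * e6x K) * e6x K + (e6x K * e6x K) * e6y K + e6x K * e6y K * e6x K +
        e6x K * e6y K * e6y K + e6y K * (e6x K * e6x K) + e6y K * e6x K * e6y K +
        e6y K * e6y K * e6x K + e6y K * (e6y K * e6y K) := by noncomm_ring
    rw [e, hX, hY] at hP
    simpa using hP
  exact e6master hX hY hS w hw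
end
end

section
/- Let K be a field. Then the algebra R(E₆) = K⟨x,y⟩/(x², y³, (x+y)³) has dimension 12 as a K-vector space. -/
noncomputable section

/-!
Modulo the relations, `y y x` and `y x y x` can be rewritten in terms of other words, so left
multiplication by `x` and by `y` maps the span of the twelve basis words into itself, acting by
explicit integer matrices. Since the words contain `1` and `x, y` generate the algebra, the words
span. Conversely, these two matrices satisfy the defining relations themselves, so they give a
representation of `R(E₆)` on `K¹²` (the regular representation) in which the `i`-th word sends the
first standard basis vector to the `i`-th; hence the words are linearly independent.
-/

structure E6Relations {R : Type*} [Ring R] (x y : R) : Prop where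
  x_sq : x ^ 2 = 0
  y_cube : y ^ 3 = 0
  add_cube : (x + y) ^ 3 = 0

def e6Word {R : Type*} [Ring R] (x y : R) : Fin 12 → R :=
  ![1, x, y, x * y, y * x, y * y, x * y * x, x * y * y, y * x * y, x * y * x * y, y * x * y * y,
    x * y * x * y * y]

theorem map_e6Word {R S F : Type*} [Ring R] [Ring S] [FunLike F R S] [RingHomClass F R S]
    (f : F) (x y : R) (i : Fin 12) : f (e6Word x y i) = e6Word (f x) (f y) i := by
  fin_cases i <;> simp [e6Word]

/- Left multiplication by `x` and by `y` in the basis `e6Word x y`: entry `(i, j)` is the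
coefficient of word `i` in the product with word `j`. -/
def e6MulX : Matrix (Fin 12) (Fin 12) ℤ := Matrix.of fun i j =>
  if ((i : ℕ), (j : ℕ)) ∈ [(1, 0), (3, 2), (6, 4), (7, 5), (9, 8), (11, 10)] then 1 else 0

def e6MulY : Matrix (Fin 12) (Fin 12) ℤ := Matrix.of fun i j =>
  if ((i : ℕ), (j : ℕ)) ∈ [(2, 0), (4, 1), (5, 2), (8, 3), (9, 6), (10, 7), (11, 9)] then 1
  else if ((i : ℕ), (j : ℕ)) ∈ [(6, 4), (7, 4), (8, 4), (9, 8), (10, 8), (11, 10)] then -1 else 0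

namespace E6Relations

variable {R : Type*} [Ring R] {x y : R}

theorem map {S : Type*} [Ring S] (h : E6Relations x y) (f : R →+* S) :
    E6Relations (f x) (f y) where
  x_sq := by rw [← map_pow, h.x_sq, map_zero]
  y_cube := by rw [← map_pow, h.y_cube, map_zero]
  add_cube := by rw [← map_add, ← map_pow, h.add_cube, map_zero]

variable (h : E6Relations x y)
include h

theorem x_mul_x : x * x = 0 := by rw [← sq, h.x_sq]

theorem y_mul_y_mul_y : y * y * y = 0 := by rw [← pow_three', h.y_cube]

theorem mul_y_mul_y_mul_y (a : R) : a * y * y * y = 0 := by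
  rw [mul_assoc, mul_assoc, ← mul_assoc y, h.y_mul_y_mul_y, mul_zero]

theorem cubic_words_sum : x * y * x + x * y * y + y * x * y + y * y * x = 0 := by
  have hcube := h.add_cube
  rw [show (x + y) ^ 3 = x * x * (x + y) + (x * y * x + x * y * y + y * x * y + y * y * x)
      + y * (x * x) + y * y * y by noncomm_ring, h.x_mul_x, h.y_mul_y_mul_y] at hcube
  simpa using hcube

theorem y_mul_y_mul_x : y * y * x = -(x * y * x + x * y * y + y * x * y) :=
  eq_neg_of_add_eq_zero_left <| by rw [← h.cubic_words_sum]; abel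

theorem y_mul_x_mul_y_mul_x : y * x * y * x = x * y * x * y := by
  rw [← sub_eq_zero]
  calc y * x * y * x - x * y * x * y
        = y * (x * y * x + x * y * y + y * x * y + y * y * x)
          - (x * y * x + x * y * y + y * x * y + y * y * x) * y
          - y * y * y * x + x * (y * y * y) := by noncomm_ring
    _ = 0 := by rw [h.cubic_words_sum, h.y_mul_y_mul_y]; simp

theorem x_mul_e6Word (j : Fin 12) : x * e6Word x y j = ∑ i, e6MulX i j • e6Word x y i := by
  fin_cases j <;> simp [Fin.sum_univ_succ, e6MulX, e6Word, ← mul_assoc, h.x_mul_x]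

theorem y_mul_e6Word (j : Fin 12) : y * e6Word x y j = ∑ i, e6MulY i j • e6Word x y i := by
  fin_cases j <;>
    simp [Fin.sum_univ_succ, e6MulY, e6Word, ← mul_assoc, add_mul, h.y_mul_y_mul_x,
      h.y_mul_x_mul_y_mul_x, h.y_mul_y_mul_y, h.mul_y_mul_y_mul_y] <;>
    abel

end E6Relations

theorem e6Relations_e6MulX_e6MulY : E6Relations e6MulX e6MulY := by
  constructor <;> decide

theorem col_zero_e6Word_e6MulX_e6MulY (i : Fin 12) :
    (e6Word e6MulX e6MulY i).col 0 = Pi.single i 1 := by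
  revert i; decide

theorem Submodule.eq_top_of_one_mem_of_mul_mem {K A : Type*} [CommSemiring K] [Semiring A]
    [Algebra K A] {s : Set A} (hs : Algebra.adjoin K s = ⊤) {M : Submodule K A} (hone : 1 ∈ M)
    (hmul : ∀ g ∈ s, ∀ m ∈ M, g * m ∈ M) : M = ⊤ := by
  have hadjoin : ∀ a ∈ Algebra.adjoin K s, ∀ m ∈ M, a * m ∈ M := by
    intro a ha
    induction ha using Algebra.adjoin_induction with
    | mem g hg => exact hmul g hg
    | algebraMap r =>
      intro m hm
      rw [Algebra.algebraMap_eq_smul_one, smul_mul_assoc, one_mul]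
      exact M.smul_mem r hm
    | add a b _ _ ha hb =>
      intro m hm
      rw [add_mul]
      exact M.add_mem (ha m hm) (hb m hm)
    | mul a b _ _ ha hb =>
      intro m hm
      rw [mul_assoc]
      exact ha _ (hb m hm)
  refine eq_top_iff'.mpr fun a => ?_
  simpa using hadjoin a (hs ▸ Algebra.mem_top) 1 hone

theorem Matrix.linearIndependent_of_col_eq_single {R m n : Type*} [CommSemiring R]
    [DecidableEq m] (M : m → Matrix m n R) (j : n) (h : ∀ i, (M i).col j = Pi.single i 1) :
    LinearIndependent R M := by
  refine LinearIndependent.of_comp ((LinearMap.proj j : (n → R) →ₗ[R] R).compLeft m) ?_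
  convert Pi.linearIndependent_single_one m R with i
  exact h i

theorem E6Relations.span_e6Word_eq_top {K A : Type*} [CommRing K] [Ring A] [Algebra K A]
    {x y : A} (h : E6Relations x y) (hgen : Algebra.adjoin K {x, y} = ⊤) :
    Submodule.span K (Set.range (e6Word x y)) = ⊤ := by
  set V := Submodule.span K (Set.range (e6Word x y))
  have hstable : ∀ (L : Matrix (Fin 12) (Fin 12) ℤ) (g : A),
      (∀ j, g * e6Word x y j = ∑ i, L i j • e6Word x y i) → ∀ m ∈ V, g * m ∈ V := by
    intro L g hg
    refine Submodule.span_le (p := V.comap (LinearMap.mulLeft K g)).2 ?_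
    rintro _ ⟨j, rfl⟩
    rw [SetLike.mem_coe, Submodule.mem_comap, LinearMap.mulLeft_apply, hg j]
    exact Submodule.sum_mem _ fun i _ => zsmul_mem (Submodule.subset_span (Set.mem_range_self i)) _
  refine Submodule.eq_top_of_one_mem_of_mul_mem hgen (Submodule.subset_span ⟨0, rfl⟩) ?_
  rintro g (rfl | rfl)
  exacts [hstable _ _ h.x_mul_e6Word, hstable _ _ h.y_mul_e6Word]

section RE6

variable (K : Type*) [CommRing K]

theorem e6Relations_e6x_e6y : E6Relations (e6x K) (e6y K) where
  x_sq := by rw [sq, e6x, ← map_mul, RingQuot.mkRingHom_rel Rel6.xx, map_zero]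
  y_cube := by
    rw [pow_three, e6y, ← map_mul, ← map_mul, RingQuot.mkRingHom_rel Rel6.yyy, map_zero]
  add_cube := by
    rw [e6x, e6y, ← map_add, ← map_pow, RingQuot.mkRingHom_rel Rel6.pow, map_zero]

theorem e6x_eq_mkAlgHom : e6x K = RingQuot.mkAlgHom K (Rel6 K) (FreeAlgebra.ι K 0) := by
  rw [e6x, ← RingQuot.mkAlgHom_coe K]; rfl

theorem e6y_eq_mkAlgHom : e6y K = RingQuot.mkAlgHom K (Rel6 K) (FreeAlgebra.ι K 1) := by
  rw [e6y, ← RingQuot.mkAlgHom_coe K]; rfl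

theorem adjoin_e6x_e6y : Algebra.adjoin K {e6x K, e6y K} = ⊤ := by
  rw [eq_top_iff, ← (AlgHom.range_eq_top _).2 (RingQuot.mkAlgHom_surjective K (Rel6 K)),
    ← Algebra.map_top, ← FreeAlgebra.adjoin_range_ι, ← Algebra.adjoin_image,
    Algebra.adjoin_le_iff]
  rintro _ ⟨_, ⟨i, rfl⟩, rfl⟩
  fin_cases i
  exacts [Algebra.subset_adjoin (.inl (e6x_eq_mkAlgHom K).symm),
    Algebra.subset_adjoin (.inr (e6y_eq_mkAlgHom K).symm)]

variable {K} {A : Type*} [Ring A] [Algebra K A] {a b : A}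

def RE6.lift (h : E6Relations a b) : RE6 K →ₐ[K] A :=
  RingQuot.liftAlgHom K ⟨FreeAlgebra.lift K ![a, b], fun _ _ r => by
    cases r
    · simpa using h.x_mul_x
    · simpa [← mul_assoc] using h.y_mul_y_mul_y
    · simpa using h.add_cube⟩

theorem RE6.lift_e6x (h : E6Relations a b) : RE6.lift h (e6x K) = a := by
  simp [RE6.lift, e6x_eq_mkAlgHom]

theorem RE6.lift_e6y (h : E6Relations a b) : RE6.lift h (e6y K) = b := by
  simp [RE6.lift, e6y_eq_mkAlgHom]

variable (K)

theorem linearIndependent_e6Word : LinearIndependent K (e6Word (e6x K) (e6y K)) := by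
  let c := (Int.castRingHom K).mapMatrix (m := Fin 12)
  let ρ := RE6.lift (K := K) (e6Relations_e6MulX_e6MulY.map c)
  refine LinearIndependent.of_comp ρ.toLinearMap ?_
  refine Matrix.linearIndependent_of_col_eq_single _ 0 fun i => ?_
  have hρ : ρ (e6Word (e6x K) (e6y K) i) = c (e6Word e6MulX e6MulY i) := by
    rw [map_e6Word ρ, map_e6Word c, RE6.lift_e6x, RE6.lift_e6y]
  ext k
  have hk := congrFun (col_zero_e6Word_e6MulX_e6MulY i) k
  rw [Matrix.col_apply] at hk
  simp [hρ, c, hk, Pi.single_apply, apply_ite (Int.cast : ℤ → K)]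

end RE6

/-- For a field `K`, the algebra `R(E₆) = K⟨x,y⟩/(x², y³, (x+y)³)` has dimension `12`
as a `K`-vector space. -/
theorem e6_finrank_eq_twelve (K : Type*) [Field K] :
    Module.finrank K (RE6 K) = 12 := by
  have hspan := (e6Relations_e6x_e6y K).span_e6Word_eq_top (adjoin_e6x_e6y K)
  rw [Module.finrank_eq_card_basis (Module.Basis.mk (linearIndependent_e6Word K) hspan.ge),
    Fintype.card_fin]

end
end

section
/- Let K be a field of characteristic different from 2 and θ₁,…,θ₁₁ ∈ K. Then the system of six equations (i) θ₂ − 2θ₃ + θ₁ = 0; (ii) 3θ₄ − 2θ₅ + θ₆ − 2θ₇ + 2θ₁² − 2θ₁θ₃ + θ₂² − θ₃² = 0; (iii) 3θ₄ − 2θ₅ + θ₆ − 2θ₇ + θ₁² + 2θ₂² − 2θ₂θ₃ − θ₃² = 0; (iv) 3θ₈ − 2θ₉ + 3θ₁₀ − 2θ₁₁ + 3θ₁θ₄ − 2θ₁θ₅ + 3θ₂θ₄ − 2θ₂θ₇ − 2θ₃θ₅ + 2θ₃θ₆ − 2θ₃θ₇ + θ₁²θ₂ + θ₁θ₂² − 4θ₁θ₂θ₃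 + θ₂³ + θ₁³ = 0; (v) 3θ₈ − 2θ₉ + 3θ₁₀ − 2θ₁₁ + 2θ₁θ₄ − 2θ₁θ₅ + θ₁θ₆ + 2θ₂θ₄ + θ₂θ₆ − 2θ₂θ₇ + 2θ₃θ₄ − 2θ₃θ₅ − 2θ₃θ₇ + θ₁²θ₂ + θ₁θ₂² − 4θ₁θ₂θ₃ + θ₂³ + θ₁³ = 0; (vi) 4θ₁θ₈ − 2θ₁θ₉ + 2θ₁θ₁₀ − 2θ₁θ₁₁ − 2θ₂θ₈ + 2θ₂θ₉ − 4θ₂θ₁₀ + 2θ₂θ₁₁ − 2θ₃θ₈ + 2θ₃θ₁₀ − 2θ₁θ₂θ₇ + 2θ₁θ₃θ₆ + 2θ₁²θ₄ − 2θ₁²θ₅ − 2θ₂²θ₄ + 2θ₂²θ₇ − 2θ₂θ₃θ₄ + 2θ₂θ₃θ₅ + 2θ₁θ₂θ₅ + 2θ₁θ₃θ₄ − 2θ₁θ₃θ₅ − 2θ₂θ₃θ₆ − 2θ₁θ₃θ₇ + 2θ₂θ₃θ₇ + θ₁⁴ − 4θ₁²θ₂θ₃ + 4θ₁θ₂²θ₃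 − θ₂⁴ = 0 holds if and only if θ₂ = 2θ₃ − θ₁, θ₆ = −3θ₁² + 6θ₁θ₃ − 3θ₃² − 3θ₄ + 2θ₅ + 2θ₇, and θ₁₁ = θ₁²θ₃ − 2θ₁θ₃² + θ₃³ − θ₁θ₅ + θ₁θ₇ + θ₃θ₅ − θ₃θ₇ − θ₉ + (3/2)(θ₁₀ + θ₈). -/
/-- For a field `K` of characteristic different from `2`, the system of six equations
obtained from the admissibility condition `(x+y+f)⁴ = 0` for deformed preprojective
algebras of type `E₇` is equivalent to the three explicit substitution formulas for
`θ₂`, `θ₆` and `θ₁₁`. -/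
theorem e7_admissibility_system_iff (K : Type*) [Field K] (h2 : (2 : K) ≠ 0)
    (θ₁ θ₂ θ₃ θ₄ θ₅ θ₆ θ₇ θ₈ θ₉ θ₁₀ θ₁₁ : K) :
    (θ₂ - 2*θ₃ + θ₁ = 0 ∧
     3*θ₄ - 2*θ₅ + θ₆ - 2*θ₇ + 2*θ₁^2 - 2*θ₁*θ₃ + θ₂^2 - θ₃^2 = 0 ∧
     3*θ₄ - 2*θ₅ + θ₆ - 2*θ₇ + θ₁^2 + 2*θ₂^2 - 2*θ₂*θ₃ - θ₃^2 = 0 ∧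
     3*θ₈ - 2*θ₉ + 3*θ₁₀ - 2*θ₁₁ + 3*θ₁*θ₄ - 2*θ₁*θ₅ + 3*θ₂*θ₄ - 2*θ₂*θ₇
       - 2*θ₃*θ₅ + 2*θ₃*θ₆ - 2*θ₃*θ₇ + θ₁^2*θ₂ + θ₁*θ₂^2 - 4*θ₁*θ₂*θ₃
       + θ₂^3 + θ₁^3 = 0 ∧
     3*θ₈ - 2*θ₉ + 3*θ₁₀ - 2*θ₁₁ + 2*θ₁*θ₄ - 2*θ₁*θ₅ + θ₁*θ₆ + 2*θ₂*θ₄ + θ₂*θ₆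
       - 2*θ₂*θ₇ + 2*θ₃*θ₄ - 2*θ₃*θ₅ - 2*θ₃*θ₇ + θ₁^2*θ₂ + θ₁*θ₂^2
       - 4*θ₁*θ₂*θ₃ + θ₂^3 + θ₁^3 = 0 ∧
     4*θ₁*θ₈ - 2*θ₁*θ₉ + 2*θ₁*θ₁₀ - 2*θ₁*θ₁₁ - 2*θ₂*θ₈ + 2*θ₂*θ₉ - 4*θ₂*θ₁₀
       + 2*θ₂*θ₁₁ - 2*θ₃*θ₈ + 2*θ₃*θ₁₀ - 2*θ₁*θ₂*θ₇ + 2*θ₁*θ₃*θ₆ + 2*θ₁^2*θ₄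
       - 2*θ₁^2*θ₅ - 2*θ₂^2*θ₄ + 2*θ₂^2*θ₇ - 2*θ₂*θ₃*θ₄ + 2*θ₂*θ₃*θ₅
       + 2*θ₁*θ₂*θ₅ + 2*θ₁*θ₃*θ₄ - 2*θ₁*θ₃*θ₅ - 2*θ₂*θ₃*θ₆ - 2*θ₁*θ₃*θ₇
       + 2*θ₂*θ₃*θ₇ + θ₁^4 - 4*θ₁^2*θ₂*θ₃ + 4*θ₁*θ₂^2*θ₃ - θ₂^4 = 0)
    ↔
    (θ₂ = 2*θ₃ - θ₁ ∧
     θ₆ = -3*θ₁^2 + 6*θ₁*θ₃ - 3*θ₃^2 - 3*θ₄ + 2*θ₅ + 2*θ₇ ∧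
     θ₁₁ = θ₁^2*θ₃ - 2*θ₁*θ₃^2 + θ₃^3 - θ₁*θ₅ + θ₁*θ₇ + θ₃*θ₅ - θ₃*θ₇ - θ₉
       + (3/2) * (θ₁₀ + θ₈)) := by
  constructor
  · rintro ⟨h1, h2, h3, h4, h5, h6⟩
    have e2 : θ₂ = 2*θ₃ - θ₁ := by linear_combination h1
    subst e2
    refine ⟨by ring, by linear_combination h2, ?_⟩
    have e6 : θ₆ = -3*θ₁^2 + 6*θ₁*θ₃ - 3*θ₃^2 - 3*θ₄ + 2*θ₅ + 2*θ₇ := by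
      linear_combination h2
    subst e6
    field_simp
    linear_combination (-(1:K)) * h4
  · rintro ⟨h1, h2, h3⟩
    subst h1; subst h2
    refine ⟨by ring, by ring, by ring, ?_, ?_, ?_⟩ <;>
      · rw [h3]; field_simp; ring
end
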